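/- Let p = (2/5, 2/5, 1/10, 1/10) and q = (1/2, 1/4, 1/4, 0) be probability vectors on Fin 4, and let φ = (3/5, 2/5) be a probability vector on Fin 2. Then ¬(p ≺ q), ¬(q ≺ p), and p ⊗ φ ≺ q ⊗ φ. -/

import Mathlib

set_option maxRecDepth 10000

open Finset

/-!
For vectors of rationals with a common denominator `d`, the maximal `k`-term sums are those of
the numerator vector divided by `d`, and for a vector of naturals the maximum over the `k`-subsets
of a finite type is a computable `Finset.sup`; so all three claims reduce to finite checks.
The failures of `p ≺ q` and `q ≺ p` show up at `k = 2` (`4/5 > 3/4`) and `k = 1` (`1/2 > 2/5`).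
For the catalysed pair the sorted partial sums are `(24, 48, 64, 80, 86, 92, 96, 100) / 100`
against `(30, 50, 65, 80, 90, 100, 100, 100) / 100`.
-/

/-- max over finsets of card k of the sum of entries -/
noncomputable def maxSum {ι : Type*} [Fintype ι] (p : ι → ℝ) (k : ℕ) : ℝ :=
  sSup {x : ℝ | ∃ S : Finset ι, S.card = k ∧ x = ∑ i ∈ S, p i}

/-- majorization: equal total sums, and for each k the max k-term partial sum
of `p` is at most that of `q`. -/
def Maj {ι : Type*} [Fintype ι] (p q : ι → ℝ) : Prop :=
  (∑ i, p i = ∑ i, q i) ∧ ∀ k : ℕ, maxSum p k ≤ maxSum q k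

/-- tensor product of two vectors -/
def tensor {ι κ : Type*} (p : ι → ℝ) (r : κ → ℝ) : ι × κ → ℝ :=
  fun x => p x.1 * r x.2

section MaxSum

variable {ι : Type*} [Fintype ι]

lemma bddAbove_partialSums (p : ι → ℝ) (k : ℕ) :
    BddAbove {x : ℝ | ∃ S : Finset ι, S.card = k ∧ x = ∑ i ∈ S, p i} := by
  refine ((Set.finite_range fun S : Finset ι => ∑ i ∈ S, p i).subset ?_).bddAbove
  rintro x ⟨S, -, rfl⟩
  exact ⟨S, rfl⟩

lemma sum_le_maxSum (p : ι → ℝ) (S : Finset ι) : ∑ i ∈ S, p i ≤ maxSum p S.card :=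
  le_csSup (bddAbove_partialSums p _) ⟨S, rfl, rfl⟩

lemma maxSum_le {p : ι → ℝ} {k : ℕ} {c : ℝ} (hk : k ≤ Fintype.card ι)
    (h : ∀ S : Finset ι, S.card = k → ∑ i ∈ S, p i ≤ c) : maxSum p k ≤ c := by
  obtain ⟨S, -, hS⟩ := exists_subset_card_eq (s := (univ : Finset ι)) (by simpa using hk)
  refine csSup_le ⟨_, S, hS, rfl⟩ ?_
  rintro x ⟨S, hS, rfl⟩
  exact h S hS

lemma maxSum_of_card_lt (p : ι → ℝ) {k : ℕ} (hk : Fintype.card ι < k) : maxSum p k = 0 := by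
  have hempty : {x : ℝ | ∃ S : Finset ι, S.card = k ∧ x = ∑ i ∈ S, p i} = ∅ := by
    refine Set.eq_empty_of_forall_notMem ?_
    rintro x ⟨S, rfl, -⟩
    exact hk.not_ge S.card_le_univ
  rw [maxSum, hempty, Real.sSup_empty]

def natMaxSum (n : ι → ℕ) (k : ℕ) : ℕ :=
  (univ.powersetCard k).sup fun S => ∑ i ∈ S, n i

lemma natMaxSum_of_card_lt (n : ι → ℕ) {k : ℕ} (hk : Fintype.card ι < k) :
    natMaxSum n k = 0 := by
  rw [natMaxSum, powersetCard_eq_empty.2 (by simpa using hk), sup_empty, Nat.bot_eq_zero]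

lemma maxSum_natCast_div (n : ι → ℕ) (d k : ℕ) :
    maxSum (fun i => (n i : ℝ) / d) k = natMaxSum n k / d := by
  rcases le_or_gt k (Fintype.card ι) with hk | hk
  · have hcast (S : Finset ι) : ∑ i ∈ S, (n i : ℝ) / d = (∑ i ∈ S, n i : ℕ) / d := by
      push_cast; exact (sum_div ..).symm
    refine le_antisymm (maxSum_le hk fun S hS => ?_) ?_
    · rw [hcast]
      gcongr
      exact le_sup (f := fun S => ∑ i ∈ S, n i) (mem_powersetCard.2 ⟨subset_univ S, hS⟩)
    · obtain ⟨S, hS, hmax⟩ := exists_mem_eq_sup (univ.powersetCard k)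
        (powersetCard_nonempty.2 (by rwa [card_univ]))
        fun S => ∑ i ∈ S, n i
      rw [natMaxSum, hmax, ← hcast, ← (mem_powersetCard.1 hS).2]
      exact sum_le_maxSum _ S
  · rw [maxSum_of_card_lt _ hk, natMaxSum_of_card_lt _ hk, Nat.cast_zero, zero_div]

lemma maj_natCast_div_iff (m n : ι → ℕ) {d : ℕ} (hd : 0 < d) :
    Maj (fun i => (m i : ℝ) / d) (fun i => (n i : ℝ) / d) ↔
      ∑ i, m i = ∑ i, n i ∧ ∀ k ≤ Fintype.card ι, natMaxSum m k ≤ natMaxSum n k := by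
  have hd' : (0 : ℝ) < d := Nat.cast_pos.2 hd
  simp only [Maj, maxSum_natCast_div, ← sum_div, div_le_div_iff_of_pos_right hd',
    div_left_inj' hd'.ne', Nat.cast_le]
  norm_cast
  refine and_congr_right fun _ => ⟨fun h k _ => h k, fun h k => ?_⟩
  rcases le_or_gt k (Fintype.card ι) with hk | hk
  · exact h k hk
  · rw [natMaxSum_of_card_lt _ hk]
    exact Nat.zero_le _

end MaxSum

lemma tensor_natCast_div {ι κ : Type*} (m : ι → ℕ) (n : κ → ℕ) (a b : ℕ) :
    tensor (fun i => (m i : ℝ) / a) (fun j => (n j : ℝ) / b) =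
      fun x => ((m x.1 * n x.2 : ℕ) : ℝ) / (a * b : ℕ) := by
  funext x
  push_cast
  exact div_mul_div_comm ..

/-- Two incomparable diagonal distributions for which the two-level state
`(3/5, 2/5)` acts as a catalyst. -/
theorem catalysis_example :
    ¬ Maj (![2/5, 2/5, 1/10, 1/10] : Fin 4 → ℝ) (![1/2, 1/4, 1/4, 0] : Fin 4 → ℝ) ∧
    ¬ Maj (![1/2, 1/4, 1/4, 0] : Fin 4 → ℝ) (![2/5, 2/5, 1/10, 1/10] : Fin 4 → ℝ) ∧
    Maj (tensor (![2/5, 2/5, 1/10, 1/10] : Fin 4 → ℝ) (![3/5, 2/5] : Fin 2 → ℝ))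
        (tensor (![1/2, 1/4, 1/4, 0] : Fin 4 → ℝ) (![3/5, 2/5] : Fin 2 → ℝ)) := by
  have hp : (![2/5, 2/5, 1/10, 1/10] : Fin 4 → ℝ) =
      fun i => ((![8, 8, 2, 2] : Fin 4 → ℕ) i : ℝ) / ((20 : ℕ) : ℝ) := by
    funext i; fin_cases i <;> norm_num
  have hq : (![1/2, 1/4, 1/4, 0] : Fin 4 → ℝ) =
      fun i => ((![10, 5, 5, 0] : Fin 4 → ℕ) i : ℝ) / ((20 : ℕ) : ℝ) := by
    funext i; fin_cases i <;> norm_num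
  have hφ : (![3/5, 2/5] : Fin 2 → ℝ) =
      fun j => ((![3, 2] : Fin 2 → ℕ) j : ℝ) / ((5 : ℕ) : ℝ) := by
    funext j; fin_cases j <;> norm_num
  rw [hp, hq, hφ, tensor_natCast_div, tensor_natCast_div, maj_natCast_div_iff,
    maj_natCast_div_iff, maj_natCast_div_iff] <;> decide
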